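/- Let B_w be a bilateral weighted backward shift on ℓp(ℤ) (1 ≤ p < ∞) or c0(ℤ) with bounded weights bounded away from zero and with no nontrivial periodic points. If B_w has the periodic shadowing property, then for every ε > 0 there is δ > 0 such that for all integers k ≤ l ≤ m, at least one of: (a) |ε/(w(l+1)⋯w(m)) − δ ∑_{i=0}^{m−l−1} 1/(w(m)⋯w(m−i))| ≥ δ, or (b) |w(k)⋯w(l)·ε − δ ∑_{i=0}^{k−l+1} w(k)⋯w(k−i)| ≥ δ holds. -/

import Mathlib

open Finset

/-- `ℓᵖ(ℤ)`. -/
abbrev LpZ (p : ENNReal) := lp (fun _ : ℤ => ℝ) p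

/-- `c₀(ℤ)`. -/
abbrev C0Z := ZeroAtInftyContinuousMap ℤ ℝ

section Defs

variable {X : Type*} [NormedAddCommGroup X] [NormedSpace ℝ X]

/-- `o : ℤ → X` is a full orbit of `T`. -/
def IsOrbit (T : X ≃L[ℝ] X) (o : ℤ → X) : Prop := ∀ j : ℤ, o (j + 1) = T (o j)

/-- `(x_j)_{j ∈ ℤ}` is a `δ`-pseudotrajectory of `T`. -/
def IsPT (T : X ≃L[ℝ] X) (δ : ℝ) (x : ℤ → X) : Prop :=
  ∀ j : ℤ, ‖T (x j) - x (j + 1)‖ < δ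

/-- A sequence `x : ℤ → X` is periodic. -/
def IsPer (x : ℤ → X) : Prop := ∃ p : ℕ, 1 ≤ p ∧ ∀ j : ℤ, x (j + p) = x j

/-- The shadowing property: every `δ`-pseudotrajectory is `ε`-shadowed by some full orbit. -/
def SP (T : X ≃L[ℝ] X) : Prop :=
  ∀ ε > (0 : ℝ), ∃ δ > (0 : ℝ), ∀ x : ℤ → X, IsPT T δ x →
    ∃ o : ℤ → X, IsOrbit T o ∧ ∀ j : ℤ, ‖x j - o j‖ < ε

/-- The periodic shadowing property: every periodic `δ`-pseudotrajectory is `ε`-shadowed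
by (the orbit of) a periodic point. -/
def PSP (T : X ≃L[ℝ] X) : Prop :=
  ∀ ε > (0 : ℝ), ∃ δ > (0 : ℝ), ∀ x : ℤ → X, IsPT T δ x → IsPer x →
    ∃ o : ℤ → X, IsOrbit T o ∧ IsPer o ∧ ∀ j : ℤ, ‖x j - o j‖ < ε

/-- `x` is a chain recurrent point of `T`: for every `δ > 0` there is a finite
`δ`-chain from `x` to `x`. -/
def ChainRec (T : X →L[ℝ] X) (x : X) : Prop :=
  ∀ δ > (0 : ℝ), ∃ (k : ℕ) (c : ℕ → X), 1 ≤ k ∧ c 0 = x ∧ c k = x ∧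
    ∀ j < k, ‖T (c j) - c (j + 1)‖ < δ

/-- `T` has no nontrivial periodic point. -/
def OnlyTrivialPer (T : X →L[ℝ] X) : Prop :=
  ∀ x : X, (∃ p : ℕ, 1 ≤ p ∧ (T ^ p) x = x) → x = 0

end Defs

/-- The weight condition: for every `ε > 0` there is `δ > 0` such that for all
`k ≤ l ≤ m` one of
(a) `|ε/(w(l+1)⋯w(m)) − δ ∑_{i=0}^{m−l−1} 1/(w(m)⋯w(m−i))| ≥ δ`, or
(b) `|w(k)⋯w(l)·ε − δ ∑_{i=0}^{k−l+1} w(k)⋯w(k−i)| ≥ δ` holds. -/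
def WCond (w : ℤ → ℝ) : Prop :=
  ∀ ε > (0 : ℝ), ∃ δ > (0 : ℝ), ∀ k l m : ℤ, k ≤ l → l ≤ m →
    (δ ≤ |ε / (∏ j ∈ Finset.range (m - l).toNat, w (l + 1 + j)) -
          δ * ∑ i ∈ Finset.range (m - l).toNat,
                (∏ j ∈ Finset.range (i + 1), w (m - j))⁻¹|) ∨
    (δ ≤ |(∏ j ∈ Finset.range (l - k + 1).toNat, w (k + j)) * ε -
          δ * ∑ i ∈ Finset.range (k - l + 2).toNat,
                ∏ j ∈ Finset.range (i + 1), w (k - j)|)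

/-! Suppose both alternatives fail at `k ≤ l ≤ m` for a small `δ`. Walking down the coordinates
from `m + 1` to `k - 2`, put `0` at `m + 1`, `backCoeff w ε δ l p` at `p ∈ [l, m]`,
`w (p+1)⋯w l · ε` at `p ∈ [k, l]`, the quantity of alternative (b) at `k - 1`, and `0` at `k - 2`.
The shift carries each of these coefficients to the next one up to an error of order `δ` (exactly
`δ` on `(l, m]`, none on `(k, l]`), so the vectors `a p • e p` form a closed chain, whose
periodic repetition is a periodic pseudotrajectory through `ε • e l`. Periodic shadowing would
put it into the open `ε`-ball, because the only periodic point is `0`. -/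

/-- `a` lists the coefficients of the chain `a r • e r, a (r - 1) • e (r - 1), …, a q • e q` of
the weighted shift `e p ↦ w p • e (p - 1)`. -/
def ClosedChainsSmall (w : ℤ → ℝ) : Prop :=
  ∀ ε > (0 : ℝ), ∃ δ > (0 : ℝ), ∀ (q r : ℤ) (a : ℤ → ℝ), a q = 0 → a r = 0 →
    (∀ p ∈ Set.Ioc q r, |w p * a p - a (p - 1)| < δ) → ∀ p ∈ Set.Ioc q r, |a p| < ε

section Shadowing

variable {X : Type*} [NormedAddCommGroup X] [NormedSpace ℝ X] {T : X ≃L[ℝ] X}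

lemma IsOrbit.pow_apply {o : ℤ → X} (ho : IsOrbit T o) (j : ℤ) (n : ℕ) :
    ((T : X →L[ℝ] X) ^ n) (o j) = o (j + n) := by
  induction n with
  | zero => simp
  | succ n ih =>
    rw [pow_succ', mul_apply_eq_comp, ih, Nat.cast_succ, ← add_assoc, ho]
    rfl

lemma IsOrbit.eq_zero_of_isPer (hT : OnlyTrivialPer (T : X →L[ℝ] X)) {o : ℤ → X}
    (ho : IsOrbit T o) (hper : IsPer o) (j : ℤ) : o j = 0 := by
  obtain ⟨p, hp, hop⟩ := hper
  exact hT _ ⟨p, hp, by rw [ho.pow_apply, hop]⟩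

lemma PSP.norm_lt_of_isPer (hT : OnlyTrivialPer (T : X →L[ℝ] X)) (hpsp : PSP T) :
    ∀ ε > (0 : ℝ), ∃ δ > (0 : ℝ), ∀ x : ℤ → X, IsPT T δ x → IsPer x → ∀ j, ‖x j‖ < ε := by
  intro ε hε
  obtain ⟨δ, hδ, hshadow⟩ := hpsp ε hε
  refine ⟨δ, hδ, fun x hx hxper j => ?_⟩
  obtain ⟨o, ho, hoper, hxo⟩ := hshadow x hx hxper
  simpa [ho.eq_zero_of_isPer hT hoper j] using hxo j

lemma exists_isPT_isPer_of_closedChain {δ : ℝ} {P : ℕ} (hP : 0 < P) {y : ℕ → X}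
    (hy : y P = y 0) (hchain : ∀ i < P, ‖T (y i) - y (i + 1)‖ < δ) :
    ∃ x : ℤ → X, IsPT T δ x ∧ IsPer x ∧ ∀ i < P, x i = y i := by
  have hP' : (0 : ℤ) < P := by exact_mod_cast hP
  refine ⟨fun j => y (j % P).toNat, fun j => ?_, ⟨P, hP, fun j => by simp⟩, fun i hi => ?_⟩
  · have h₀ := Int.emod_nonneg j hP'.ne'
    have h₁ := Int.emod_lt_of_pos j hP'
    have hsucc : y ((j + 1) % P).toNat = y ((j % P).toNat + 1) := by
      rw [← Int.emod_add_emod]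
      rcases (by omega : j % P + 1 < P ∨ j % P + 1 = P) with hlt | heq
      · rw [Int.emod_eq_of_lt (by omega) hlt, Int.toNat_add (by omega) zero_le_one]
        rfl
      · rw [heq, Int.emod_self, Int.toNat_zero, ← hy]
        congr
        omega
    simpa only [hsucc] using hchain _ (by omega)
  · simp [Int.emod_eq_of_lt (by omega : (0 : ℤ) ≤ i) (by omega : (i : ℤ) < P)]

lemma PSP.norm_lt_of_closedChain (hT : OnlyTrivialPer (T : X →L[ℝ] X)) (hpsp : PSP T) :
    ∀ ε > (0 : ℝ), ∃ δ > (0 : ℝ), ∀ (P : ℕ) (y : ℕ → X), y P = y 0 →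
      (∀ i < P, ‖T (y i) - y (i + 1)‖ < δ) → ∀ i < P, ‖y i‖ < ε := by
  intro ε hε
  obtain ⟨δ, hδ, hsmall⟩ := hpsp.norm_lt_of_isPer hT ε hε
  refine ⟨δ, hδ, fun P y hy hchain i hi => ?_⟩
  obtain ⟨x, hx, hxper, hxy⟩ := exists_isPT_isPer_of_closedChain (by omega) hy hchain
  simpa [hxy i hi] using hsmall x hx hxper i

lemma closedChainsSmall_of_psp {w : ℤ → ℝ} (e : ℤ → X) (he : ∀ n, ‖e n‖ = 1)
    (hTe : ∀ n, T (e n) = w n • e (n - 1)) (hT : OnlyTrivialPer (T : X →L[ℝ] X))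
    (hpsp : PSP T) : ClosedChainsSmall w := by
  intro ε hε
  obtain ⟨δ, hδ, hsmall⟩ := hpsp.norm_lt_of_closedChain hT ε hε
  refine ⟨δ, hδ, fun q r a hq hr hchain p ⟨hqp, hpr⟩ => ?_⟩
  have hy := hsmall (r - q).toNat (fun i => a (r - i) • e (r - i))
    (by simp only [Int.toNat_of_nonneg (by omega : 0 ≤ r - q), sub_sub_cancel, hq, hr,
      Nat.cast_zero, sub_zero, zero_smul]) (fun i hi => ?_)
    (r - p).toNat (by omega)
  · simpa only [Int.toNat_of_nonneg (by omega : 0 ≤ r - p), sub_sub_cancel, norm_smul, he,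
      mul_one, Real.norm_eq_abs] using hy
  · have := hchain (r - i) ⟨by omega, by omega⟩
    simp only [map_smul, hTe, smul_smul, ← sub_smul, norm_smul, he, mul_one, Nat.cast_add,
      Nat.cast_one, sub_add_eq_sub_sub, Real.norm_eq_abs]
    simpa [mul_comm] using this

end Shadowing

/-- `w p ⋯ w q`, and `1` when `q < p`. -/
def weightProd (w : ℤ → ℝ) (p q : ℤ) : ℝ := ∏ j ∈ range (q - p + 1).toNat, w (p + j)

/-- The quantity of alternative (a) in `WCond`. -/
noncomputable def backCoeff (w : ℤ → ℝ) (ε δ : ℝ) (l m : ℤ) : ℝ :=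
  ε / (∏ j ∈ range (m - l).toNat, w (l + 1 + j)) -
    δ * ∑ i ∈ range (m - l).toNat, (∏ j ∈ range (i + 1), w (m - j))⁻¹

lemma weightProd_of_lt (w : ℤ → ℝ) {p q : ℤ} (h : q < p) : weightProd w p q = 1 := by
  simp [weightProd, show (q - p + 1).toNat = 0 by omega]

lemma mul_weightProd_succ (w : ℤ → ℝ) {p q : ℤ} (h : p ≤ q) :
    w p * weightProd w (p + 1) q = weightProd w p q := by
  obtain ⟨n, rfl⟩ : ∃ n : ℕ, q = p + n := ⟨(q - p).toNat, by omega⟩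
  rw [weightProd, weightProd, show (p + n - (p + 1) + 1).toNat = n by omega,
    show (p + n - p + 1).toNat = n + 1 by omega, prod_range_succ']
  push_cast
  rw [mul_comm, add_zero]
  congr 1
  exact prod_congr rfl fun j _ => by ring_nf

lemma backCoeff_self (w : ℤ → ℝ) (ε δ : ℝ) (l : ℤ) : backCoeff w ε δ l l = ε := by
  simp [backCoeff]

section Weights

variable {w : ℤ → ℝ}

lemma mul_backCoeff (hw : ∀ n, w n ≠ 0) (ε δ : ℝ) {l m : ℤ} (h : l < m) :
    w m * backCoeff w ε δ l m = backCoeff w ε δ l (m - 1) - δ := by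
  obtain ⟨s, rfl⟩ : ∃ s : ℕ, m = l + 1 + s := ⟨(m - l - 1).toNat, by omega⟩
  have hprod : ∀ i : ℕ, ∏ j ∈ range (i + 1 + 1), w (l + 1 + s - j)
      = w (l + 1 + s) * ∏ j ∈ range (i + 1), w (l + 1 + s - 1 - j) := by
    intro i
    rw [prod_range_succ', mul_comm]
    push_cast
    rw [sub_zero]
    exact congrArg _ (prod_congr rfl fun j _ => by ring_nf)
  have hF : ∏ j ∈ range s, w (l + 1 + j) ≠ 0 := prod_ne_zero_iff.2 fun _ _ => hw _
  have hm := hw (l + 1 + s)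
  rw [backCoeff, backCoeff, show (l + 1 + s - l).toNat = s + 1 by omega,
    show (l + 1 + s - 1 - l).toNat = s by omega, prod_range_succ, sum_range_succ']
  simp only [hprod, mul_inv, ← mul_sum, zero_add, prod_range_one, Nat.cast_zero, sub_zero]
  field_simp
  ring

variable {C : ℝ}

lemma abs_sum_prod_le (hbd : ∀ n, |w n| ≤ C) (k : ℤ) {N : ℕ} (hN : N ≤ 2) :
    |∑ i ∈ range N, ∏ j ∈ range (i + 1), w (k - j)| ≤ C + C ^ 2 := by
  have hC : 0 ≤ C := (abs_nonneg _).trans (hbd 0)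
  calc |∑ i ∈ range N, ∏ j ∈ range (i + 1), w (k - j)|
      ≤ ∑ i ∈ range N, |∏ j ∈ range (i + 1), w (k - j)| := abs_sum_le_sum_abs _ _
    _ ≤ ∑ i ∈ range N, C ^ (i + 1) := by
        refine sum_le_sum fun i _ => ?_
        rw [abs_prod]
        simpa using prod_le_prod (s := range (i + 1)) (fun _ _ => abs_nonneg _)
          (fun j _ => hbd (k - j))
    _ ≤ ∑ i ∈ range 2, C ^ (i + 1) :=
        sum_le_sum_of_subset_of_nonneg (range_subset_range.2 hN) fun _ _ _ => by positivity
    _ = C + C ^ 2 := by simp [sum_range_succ]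

lemma exists_closedChain_of_abs_lt (hbd : ∀ n, |w n| ≤ C) (hw : ∀ n, w n ≠ 0) {ε δ R : ℝ}
    (hδ : 0 < δ) (hR : |R| ≤ C + C ^ 2) {k l m : ℤ} (hkl : k ≤ l) (hlm : l ≤ m)
    (hA : |backCoeff w ε δ l m| < δ) (hB : |weightProd w k l * ε - δ * R| < δ) :
    ∃ a : ℤ → ℝ, a (k - 2) = 0 ∧ a (m + 1) = 0 ∧ a l = ε ∧
      ∀ p ∈ Set.Ioc (k - 2) (m + 1), |w p * a p - a (p - 1)| ≤ (1 + C + C ^ 2) * δ := by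
  have hC : 0 ≤ C := (abs_nonneg _).trans (hbd 0)
  set B := weightProd w k l * ε - δ * R
  let a : ℤ → ℝ := fun p => if m < p then 0 else if l < p then backCoeff w ε δ l p
    else if k ≤ p then weightProd w (p + 1) l * ε else if p = k - 1 then B else 0
  have ha_back : ∀ p, l ≤ p → p ≤ m → a p = backCoeff w ε δ l p := by
    intro p hlp hpm
    rcases hlp.eq_or_lt with rfl | hlp
    · simp [a, hkl, weightProd_of_lt, backCoeff_self, not_lt.2 hpm]
    · simp [a, hlp, not_lt.2 hpm]
  have ha_fwd : ∀ p, k ≤ p → p ≤ l → a p = weightProd w (p + 1) l * ε := by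
    intro p hkp hpl
    simp [a, hkp, not_lt.2 hpl, not_lt.2 (hpl.trans hlm)]
  have ha_pred : a (k - 1) = B := by
    simp only [a]
    split_ifs <;> first | rfl | omega
  have ha_bot : a (k - 2) = 0 := by
    simp only [a]
    split_ifs <;> first | rfl | omega
  refine ⟨a, ha_bot, by simp [a], by simp [ha_fwd l hkl le_rfl, weightProd_of_lt], ?_⟩
  rintro p ⟨hp₁, hp₂⟩
  rcases (by omega : p = m + 1 ∨ (l < p ∧ p ≤ m) ∨ (k < p ∧ p ≤ l) ∨ p = k ∨ p = k - 1)
    with rfl | ⟨hlp, hpm⟩ | ⟨hkp, hpl⟩ | hpk | rfl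
  · simp only [a, lt_add_one, if_true, mul_zero, add_sub_cancel_right, ha_back m hlm le_rfl,
      zero_sub, abs_neg]
    nlinarith
  · rw [ha_back p hlp.le hpm, ha_back (p - 1) (by omega) (by omega), mul_backCoeff hw ε δ hlp,
      sub_sub_cancel_left, abs_neg, abs_of_pos hδ]
    nlinarith
  · rw [ha_fwd p hkp.le hpl, ha_fwd (p - 1) (by omega) (by omega), sub_add_cancel,
      ← mul_assoc, mul_weightProd_succ w hpl, sub_self, abs_zero]
    positivity
  · rw [hpk, ha_fwd k le_rfl hkl, ha_pred, ← mul_assoc, mul_weightProd_succ w hkl, sub_sub_cancel,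
      abs_mul, abs_of_pos hδ]
    nlinarith
  · rw [ha_pred, show k - 1 - 1 = k - 2 by ring, ha_bot, sub_zero, abs_mul]
    have := mul_le_mul (hbd (k - 1)) hB.le (abs_nonneg _) hC
    nlinarith

theorem wCond_of_closedChainsSmall (hbd : ∀ n, |w n| ≤ C) (hw : ∀ n, w n ≠ 0)
    (h : ClosedChainsSmall w) : WCond w := by
  intro ε hε
  obtain ⟨δ₀, hδ₀, hsmall⟩ := h ε hε
  have hC : 0 ≤ C := (abs_nonneg _).trans (hbd 0)
  refine ⟨δ₀ / (2 + C + C ^ 2), by positivity, fun k l m hkl hlm => ?_⟩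
  set δ := δ₀ / (2 + C + C ^ 2)
  have hδ : 0 < δ := by positivity
  have hδδ₀ : (1 + C + C ^ 2) * δ < δ₀ := by
    have : (2 + C + C ^ 2) * δ = δ₀ := mul_div_cancel₀ _ (by positivity)
    linarith
  by_contra! hcon
  -- for `k ≤ l` the sum in alternative (b) has at most two terms
  obtain ⟨a, ha_bot, ha_top, ha_l, hchain⟩ := exists_closedChain_of_abs_lt hbd hw hδ
    (abs_sum_prod_le hbd k (by omega)) hkl hlm hcon.1 hcon.2
  have hl := hsmall _ _ a ha_bot ha_top (fun p hp => (hchain p hp).trans_lt hδδ₀) l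
    ⟨by omega, by omega⟩
  rw [ha_l, abs_of_pos hε] at hl
  exact lt_irrefl _ hl

end Weights

lemma weightedShift_lp_single {p : ENNReal} [Fact (1 ≤ p)] {w : ℤ → ℝ} {T : LpZ p → LpZ p}
    (hT : ∀ x n, T x n = w (n + 1) * x (n + 1)) (n : ℤ) :
    T (lp.single p n 1) = w n • lp.single p (n - 1) 1 := by
  ext j
  rw [hT, lp.coeFn_smul, Pi.smul_apply, lp.single_apply, lp.single_apply]
  rcases eq_or_ne j (n - 1) with rfl | hj
  · simp
  · simp [hj, show j + 1 ≠ n by omega]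

def c0Single (n : ℤ) : C0Z where
  toFun := Pi.single n 1
  continuous_toFun := continuous_of_discreteTopology
  zero_at_infty' := by
    rw [Filter.cocompact_eq_cofinite]
    refine tendsto_const_nhds.congr' ?_
    filter_upwards [Filter.eventually_cofinite_ne n] with m hm
    simp [hm]

lemma c0Single_apply (n m : ℤ) : c0Single n m = Pi.single (M := fun _ => ℝ) n 1 m := rfl

lemma norm_c0Single (n : ℤ) : ‖c0Single n‖ = 1 := by
  rw [← ZeroAtInftyContinuousMap.norm_toBCF_eq_norm]
  refine le_antisymm ((BoundedContinuousFunction.norm_le zero_le_one).2 fun m => ?_) ?_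
  · rw [ZeroAtInftyContinuousMap.toBCF_apply, c0Single_apply, Pi.single_apply]
    split_ifs <;> simp
  · simpa [c0Single_apply] using (c0Single n).toBCF.norm_coe_le_norm n

lemma weightedShift_c0Single {w : ℤ → ℝ} {T : C0Z → C0Z}
    (hT : ∀ x n, T x n = w (n + 1) * x (n + 1)) (n : ℤ) :
    T (c0Single n) = w n • c0Single (n - 1) := by
  ext j
  rw [hT, ZeroAtInftyContinuousMap.smul_apply, c0Single_apply, c0Single_apply, Pi.single_apply,
    Pi.single_apply]
  rcases eq_or_ne j (n - 1) with rfl | hj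
  · simp
  · simp [hj, show j + 1 ≠ n by omega]

/-- If an invertible bilateral weighted backward shift on `ℓᵖ(ℤ)` (`1 ≤ p < ∞`) or
`c₀(ℤ)`, with weights bounded and bounded away from zero and no nontrivial periodic
points, has the periodic shadowing property, then the weight condition holds. -/
theorem stmt16 (w : ℤ → ℝ) (hbd : ∃ C : ℝ, ∀ n : ℤ, |w n| ≤ C)
    (hbelow : ∃ c > (0 : ℝ), ∀ n : ℤ, c ≤ |w n|) :
    (∀ (p : ENNReal) [Fact (1 ≤ p)], p ≠ ⊤ →
      ∀ T : LpZ p ≃L[ℝ] LpZ p,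
        (∀ (x : LpZ p) (n : ℤ), (T x) n = w (n + 1) * x (n + 1)) →
        OnlyTrivialPer (T : LpZ p →L[ℝ] LpZ p) → PSP T → WCond w) ∧
    (∀ T : C0Z ≃L[ℝ] C0Z,
        (∀ (x : C0Z) (n : ℤ), (T x) n = w (n + 1) * x (n + 1)) →
        OnlyTrivialPer (T : C0Z →L[ℝ] C0Z) → PSP T → WCond w) := by
  obtain ⟨C, hC⟩ := hbd
  obtain ⟨c, hc, hcw⟩ := hbelow
  have hw : ∀ n, w n ≠ 0 := fun n h => by simpa [h] using hc.trans_le (hcw n)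
  refine ⟨fun p _ _ T hT hper hpsp => ?_, fun T hT hper hpsp => ?_⟩
  · have hp : (0 : ENNReal) < p := zero_lt_one.trans_le Fact.out
    refine wCond_of_closedChainsSmall hC hw <|
      closedChainsSmall_of_psp (fun n => lp.single p n 1) (fun n => ?_) (weightedShift_lp_single hT)
        hper hpsp
    simpa using lp.norm_single (E := fun _ : ℤ => ℝ) hp n 1
  · exact wCond_of_closedChainsSmall hC hw <|
      closedChainsSmall_of_psp c0Single norm_c0Single (weightedShift_c0Single hT) hper hpsp
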